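/- Let b ∈ (0,1) and m ∈ ℝ, and consider the flat Bogoslovsky–Finsler einbein Lagrangian L(n, u̇, v̇, ẋ, ẏ) = −(1/2n)·u̇^{2b}·(−2u̇v̇ − ẋ² − ẏ²)^{1−b} − n m²/2, defined for u̇ > 0 and −2u̇v̇ − ẋ² − ẏ² > 0. Let (u, v, x, y, n) : I → ℝ⁵ be smooth with n > 0, u̇ > 0 and −2u̇v̇ − ẋ² − ẏ² > 0 on I, and suppose each momentum ∂L/∂u̇, ∂L/∂v̇, ∂L/∂ẋ, ∂L/∂ẏ (evaluated along the curve) has zero derivative in λ (the Euler–Lagrange equations, since L does not depend on the positions). Then the DISIM_b(2) deformed-dilation charge λ ↦ (b−1)·u·(∂L/∂u̇) + (1+b)·v·(∂L/∂v̇) + b·x·(∂L/∂ẋ) + b·y·(∂L/∂ẏ), generated by the vector field 𝒩_b = (b−1)u∂_u + (1+b)v∂_v + b x∂_x + b y∂_y, is constant on I. -/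

import Mathlib

/-- The flat Bogoslovsky–Finsler einbein Lagrangian
L(n,u̇,v̇,ẋ,ẏ) = −(1/2n)·u̇^{2b}·(−2u̇v̇ − ẋ² − ẏ²)^{1−b} − n m²/2. -/
noncomputable def bogoL (b m : ℝ) (n du dv dx dy : ℝ) : ℝ :=
  -(1 / (2 * n)) * du ^ (2 * b) * (-2 * du * dv - dx ^ 2 - dy ^ 2) ^ (1 - b) - n * m ^ 2 / 2


noncomputable def PUe (b N du dv dx dy : ℝ) : ℝ :=
  -(1 / (2 * N)) * (2 * b * du ^ (2 * b - 1) * (-2 * du * dv - dx ^ 2 - dy ^ 2) ^ (1 - b)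
    + du ^ (2 * b) * (-2 * dv * (1 - b) * (-2 * du * dv - dx ^ 2 - dy ^ 2) ^ (1 - b - 1)))

noncomputable def PVe (b N du dv dx dy : ℝ) : ℝ :=
  -(1 / (2 * N)) * du ^ (2 * b) * (-2 * du * (1 - b) * (-2 * du * dv - dx ^ 2 - dy ^ 2) ^ (1 - b - 1))

noncomputable def PXe (b N du dv dx dy : ℝ) : ℝ :=
  -(1 / (2 * N)) * du ^ (2 * b) * (-(2 * dx) * (1 - b) * (-2 * du * dv - dx ^ 2 - dy ^ 2) ^ (1 - b - 1))

noncomputable def PYe (b N du dv dx dy : ℝ) : ℝ :=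
  -(1 / (2 * N)) * du ^ (2 * b) * (-(2 * dy) * (1 - b) * (-2 * du * dv - dx ^ 2 - dy ^ 2) ^ (1 - b - 1))


lemma hasD_u (b m N du dv dx dy : ℝ) (hdu : du ≠ 0)
    (hS : -2 * du * dv - dx ^ 2 - dy ^ 2 ≠ 0) :
    HasDerivAt (fun w => bogoL b m N w dv dx dy) (PUe b N du dv dx dy) du := by
  have hfun : (fun w => bogoL b m N w dv dx dy)
      = fun w => (-(1 / (2 * N))) * (w ^ (2 * b) * (-2 * w * dv - dx ^ 2 - dy ^ 2) ^ (1 - b))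
        - N * m ^ 2 / 2 := by
    funext w; unfold bogoL; ring
  rw [hfun]
  have h1 : HasDerivAt (fun w : ℝ => w ^ (2 * b)) (2 * b * du ^ (2 * b - 1)) du :=
    Real.hasDerivAt_rpow_const (Or.inl hdu)
  have h2 : HasDerivAt (fun w : ℝ => -2 * w * dv - dx ^ 2 - dy ^ 2) (-2 * dv) du := by
    simpa using (((hasDerivAt_id du).const_mul (-2 : ℝ)).mul_const dv).sub_const (dx ^ 2)
      |>.sub_const (dy ^ 2)
  have h3 := h2.rpow_const (p := 1 - b) (Or.inl hS)
  have h4 := ((h1.mul h3).const_mul (-(1 / (2 * N)))).sub_const (N * m ^ 2 / 2)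
  exact h4

lemma hasD_v (b m N du dv dx dy : ℝ)
    (hS : -2 * du * dv - dx ^ 2 - dy ^ 2 ≠ 0) :
    HasDerivAt (fun w => bogoL b m N du w dx dy) (PVe b N du dv dx dy) dv := by
  have hfun : (fun w => bogoL b m N du w dx dy)
      = fun w => (-(1 / (2 * N)) * du ^ (2 * b)) * ((-2 * du * w - dx ^ 2 - dy ^ 2) ^ (1 - b))
        - N * m ^ 2 / 2 := by
    funext w; unfold bogoL; ring
  rw [hfun]
  have h2 : HasDerivAt (fun w : ℝ => -2 * du * w - dx ^ 2 - dy ^ 2) (-2 * du) dv := by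
    simpa using ((hasDerivAt_id dv).const_mul (-2 * du)).sub_const (dx ^ 2)
      |>.sub_const (dy ^ 2)
  have h3 := h2.rpow_const (p := 1 - b) (Or.inl hS)
  have h4 := (h3.const_mul (-(1 / (2 * N)) * du ^ (2 * b))).sub_const (N * m ^ 2 / 2)
  exact h4

lemma hasD_x (b m N du dv dx dy : ℝ)
    (hS : -2 * du * dv - dx ^ 2 - dy ^ 2 ≠ 0) :
    HasDerivAt (fun w => bogoL b m N du dv w dy) (PXe b N du dv dx dy) dx := by
  have hfun : (fun w => bogoL b m N du dv w dy)
      = fun w => (-(1 / (2 * N)) * du ^ (2 * b)) * ((-2 * du * dv - w ^ 2 - dy ^ 2) ^ (1 - b))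
        - N * m ^ 2 / 2 := by
    funext w; unfold bogoL; ring
  rw [hfun]
  have hsq : HasDerivAt (fun w : ℝ => w ^ 2) (2 * dx) dx := by
    simpa using hasDerivAt_pow 2 dx
  have h2 : HasDerivAt (fun w : ℝ => -2 * du * dv - w ^ 2 - dy ^ 2) (-(2 * dx)) dx := by
    simpa using (hsq.const_sub (-2 * du * dv)).sub_const (dy ^ 2)
  have h3 := h2.rpow_const (p := 1 - b) (Or.inl hS)
  have h4 := (h3.const_mul (-(1 / (2 * N)) * du ^ (2 * b))).sub_const (N * m ^ 2 / 2)
  exact h4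

lemma hasD_y (b m N du dv dx dy : ℝ)
    (hS : -2 * du * dv - dx ^ 2 - dy ^ 2 ≠ 0) :
    HasDerivAt (fun w => bogoL b m N du dv dx w) (PYe b N du dv dx dy) dy := by
  have hfun : (fun w => bogoL b m N du dv dx w)
      = fun w => (-(1 / (2 * N)) * du ^ (2 * b)) * ((-2 * du * dv - dx ^ 2 - w ^ 2) ^ (1 - b))
        - N * m ^ 2 / 2 := by
    funext w; unfold bogoL; ring
  rw [hfun]
  have hsq : HasDerivAt (fun w : ℝ => w ^ 2) (2 * dy) dy := by
    simpa using hasDerivAt_pow 2 dy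
  have h2 : HasDerivAt (fun w : ℝ => -2 * du * dv - dx ^ 2 - w ^ 2) (-(2 * dy)) dy := by
    simpa using hsq.const_sub (-2 * du * dv - dx ^ 2)
  have h3 := h2.rpow_const (p := 1 - b) (Or.inl hS)
  have h4 := (h3.const_mul (-(1 / (2 * N)) * du ^ (2 * b))).sub_const (N * m ^ 2 / 2)
  exact h4

lemma alg (b N du dv dx dy s A B : ℝ) (hN : N ≠ 0) (hdu : du ≠ 0) (hs0 : s ≠ 0)
    (hs : s = -2 * du * dv - dx ^ 2 - dy ^ 2) :
    (b - 1) * du * (-(1 / (2 * N)) * (2 * b * (A / du) * B + A * (-2 * dv * (1 - b) * (B / s))))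
      + (1 + b) * dv * (-(1 / (2 * N)) * A * (-2 * du * (1 - b) * (B / s)))
      + b * dx * (-(1 / (2 * N)) * A * (-(2 * dx) * (1 - b) * (B / s)))
      + b * dy * (-(1 / (2 * N)) * A * (-(2 * dy) * (1 - b) * (B / s))) = 0 := by
  field_simp
  subst hs
  ring

lemma keyid (b N du dv dx dy : ℝ) (hN : N ≠ 0) (hdu : 0 < du)
    (hS : 0 < -2 * du * dv - dx ^ 2 - dy ^ 2) :
    (b - 1) * du * PUe b N du dv dx dy + (1 + b) * dv * PVe b N du dv dx dy
      + b * dx * PXe b N du dv dx dy + b * dy * PYe b N du dv dx dy = 0 := by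
  have hS0 : -2 * du * dv - dx ^ 2 - dy ^ 2 ≠ 0 := ne_of_gt hS
  unfold PUe PVe PXe PYe
  rw [Real.rpow_sub_one (ne_of_gt hdu), Real.rpow_sub_one hS0]
  exact alg b N du dv dx dy _ (du ^ (2 * b)) ((-2 * du * dv - dx ^ 2 - dy ^ 2) ^ (1 - b))
    hN (ne_of_gt hdu) hS0 rfl

section diff
variable {N DU DV DX DY : ℝ → ℝ} {t b : ℝ}

lemma diffS (h1 : DifferentiableAt ℝ DU t) (h2 : DifferentiableAt ℝ DV t)
    (h3 : DifferentiableAt ℝ DX t) (h4 : DifferentiableAt ℝ DY t) :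
    DifferentiableAt ℝ (fun l => -2 * DU l * DV l - DX l ^ 2 - DY l ^ 2) t := by
  fun_prop

lemma diffInv (hn : DifferentiableAt ℝ N t) (hn0 : N t ≠ 0) :
    DifferentiableAt ℝ (fun l => -(1 / (2 * N l))) t := by
  have h2 : DifferentiableAt ℝ (fun l => 2 * N l) t := hn.const_mul 2
  exact ((differentiableAt_const (1 : ℝ)).div h2 (by simpa using hn0)).neg

lemma diffPUe (hn : DifferentiableAt ℝ N t) (h1 : DifferentiableAt ℝ DU t)
    (h2 : DifferentiableAt ℝ DV t) (h3 : DifferentiableAt ℝ DX t)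
    (h4 : DifferentiableAt ℝ DY t) (hn0 : N t ≠ 0) (hdu0 : DU t ≠ 0)
    (hS0 : -2 * DU t * DV t - DX t ^ 2 - DY t ^ 2 ≠ 0) :
    DifferentiableAt ℝ (fun l => PUe b (N l) (DU l) (DV l) (DX l) (DY l)) t := by
  unfold PUe
  have hS := diffS h1 h2 h3 h4
  have hB := hS.rpow_const (p := 1 - b) (Or.inl hS0)
  have hB' := hS.rpow_const (p := 1 - b - 1) (Or.inl hS0)
  have hA := h1.rpow_const (p := 2 * b) (Or.inl hdu0)
  have hA' := h1.rpow_const (p := 2 * b - 1) (Or.inl hdu0)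
  exact (diffInv hn hn0).mul (((hA'.const_mul (2 * b)).mul hB).add
    (hA.mul (((h2.const_mul (-2)).mul_const (1 - b)).mul hB')))

lemma diffPVe (hn : DifferentiableAt ℝ N t) (h1 : DifferentiableAt ℝ DU t)
    (h2 : DifferentiableAt ℝ DV t) (h3 : DifferentiableAt ℝ DX t)
    (h4 : DifferentiableAt ℝ DY t) (hn0 : N t ≠ 0) (hdu0 : DU t ≠ 0)
    (hS0 : -2 * DU t * DV t - DX t ^ 2 - DY t ^ 2 ≠ 0) :
    DifferentiableAt ℝ (fun l => PVe b (N l) (DU l) (DV l) (DX l) (DY l)) t := by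
  unfold PVe
  have hB' := (diffS h1 h2 h3 h4).rpow_const (p := 1 - b - 1) (Or.inl hS0)
  have hA := h1.rpow_const (p := 2 * b) (Or.inl hdu0)
  exact ((diffInv hn hn0).mul hA).mul (((h1.const_mul (-2)).mul_const (1 - b)).mul hB')

lemma diffPXe (hn : DifferentiableAt ℝ N t) (h1 : DifferentiableAt ℝ DU t)
    (h2 : DifferentiableAt ℝ DV t) (h3 : DifferentiableAt ℝ DX t)
    (h4 : DifferentiableAt ℝ DY t) (hn0 : N t ≠ 0) (hdu0 : DU t ≠ 0)
    (hS0 : -2 * DU t * DV t - DX t ^ 2 - DY t ^ 2 ≠ 0) :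
    DifferentiableAt ℝ (fun l => PXe b (N l) (DU l) (DV l) (DX l) (DY l)) t := by
  unfold PXe
  have hB' := (diffS h1 h2 h3 h4).rpow_const (p := 1 - b - 1) (Or.inl hS0)
  have hA := h1.rpow_const (p := 2 * b) (Or.inl hdu0)
  exact ((diffInv hn hn0).mul hA).mul ((((h3.const_mul 2).neg).mul_const (1 - b)).mul hB')

lemma diffPYe (hn : DifferentiableAt ℝ N t) (h1 : DifferentiableAt ℝ DU t)
    (h2 : DifferentiableAt ℝ DV t) (h3 : DifferentiableAt ℝ DX t)
    (h4 : DifferentiableAt ℝ DY t) (hn0 : N t ≠ 0) (hdu0 : DU t ≠ 0)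
    (hS0 : -2 * DU t * DV t - DX t ^ 2 - DY t ^ 2 ≠ 0) :
    DifferentiableAt ℝ (fun l => PYe b (N l) (DU l) (DV l) (DX l) (DY l)) t := by
  unfold PYe
  have hB' := (diffS h1 h2 h3 h4).rpow_const (p := 1 - b - 1) (Or.inl hS0)
  have hA := h1.rpow_const (p := 2 * b) (Or.inl hdu0)
  exact ((diffInv hn hn0).mul hA).mul ((((h4.const_mul 2).neg).mul_const (1 - b)).mul hB')

end diff

theorem stmt16 (b m : ℝ) (hb0 : 0 < b) (hb1 : b < 1)
    (a₁ a₂ : ℝ) (u v x y n : ℝ → ℝ)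
    (hu : ContDiffOn ℝ (⊤ : ℕ∞) u (Set.Ioo a₁ a₂))
    (hv : ContDiffOn ℝ (⊤ : ℕ∞) v (Set.Ioo a₁ a₂))
    (hx : ContDiffOn ℝ (⊤ : ℕ∞) x (Set.Ioo a₁ a₂))
    (hy : ContDiffOn ℝ (⊤ : ℕ∞) y (Set.Ioo a₁ a₂))
    (hn : ContDiffOn ℝ (⊤ : ℕ∞) n (Set.Ioo a₁ a₂))
    (hnpos : ∀ lam ∈ Set.Ioo a₁ a₂, 0 < n lam)
    (hdu : ∀ lam ∈ Set.Ioo a₁ a₂, 0 < deriv u lam)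
    (hpos : ∀ lam ∈ Set.Ioo a₁ a₂,
      0 < -2 * deriv u lam * deriv v lam - (deriv x lam) ^ 2 - (deriv y lam) ^ 2)
    -- the four momenta, i.e. the partial derivatives of L in its velocity arguments,
    -- evaluated along the curve
    (Pu Pv Px Py : ℝ → ℝ)
    (hPu : Pu = fun lam => deriv
      (fun w => bogoL b m (n lam) w (deriv v lam) (deriv x lam) (deriv y lam)) (deriv u lam))
    (hPv : Pv = fun lam => deriv
      (fun w => bogoL b m (n lam) (deriv u lam) w (deriv x lam) (deriv y lam)) (deriv v lam))
    (hPx : Px = fun lam => deriv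
      (fun w => bogoL b m (n lam) (deriv u lam) (deriv v lam) w (deriv y lam)) (deriv x lam))
    (hPy : Py = fun lam => deriv
      (fun w => bogoL b m (n lam) (deriv u lam) (deriv v lam) (deriv x lam) w) (deriv y lam))
    -- the Euler–Lagrange equations: each momentum has zero derivative in λ
    (hEL : ∀ lam ∈ Set.Ioo a₁ a₂,
      deriv Pu lam = 0 ∧ deriv Pv lam = 0 ∧ deriv Px lam = 0 ∧ deriv Py lam = 0) :
    ∀ lam₁ ∈ Set.Ioo a₁ a₂, ∀ lam₂ ∈ Set.Ioo a₁ a₂,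
      (b - 1) * u lam₁ * Pu lam₁ + (1 + b) * v lam₁ * Pv lam₁
          + b * x lam₁ * Px lam₁ + b * y lam₁ * Py lam₁
      = (b - 1) * u lam₂ * Pu lam₂ + (1 + b) * v lam₂ * Pv lam₂
          + b * x lam₂ * Px lam₂ + b * y lam₂ * Py lam₂ := by
  intro lam₁ h₁ lam₂ h₂
  set S : Set ℝ := Set.Ioo a₁ a₂ with hSdef
  have hSopen : IsOpen S := isOpen_Ioo
  -- smoothness of derivatives
  have htop : ((⊤ : ℕ∞) : WithTop ℕ∞) + 1 ≤ ((⊤ : ℕ∞) : WithTop ℕ∞) := by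
    rw [← WithTop.coe_one, ← WithTop.coe_add, top_add]
  have hud : ContDiffOn ℝ (⊤ : ℕ∞) (deriv u) S := hu.deriv_of_isOpen hSopen htop
  have hvd : ContDiffOn ℝ (⊤ : ℕ∞) (deriv v) S := hv.deriv_of_isOpen hSopen htop
  have hxd : ContDiffOn ℝ (⊤ : ℕ∞) (deriv x) S := hx.deriv_of_isOpen hSopen htop
  have hyd : ContDiffOn ℝ (⊤ : ℕ∞) (deriv y) S := hy.deriv_of_isOpen hSopen htop
  have diffAt : ∀ (f : ℝ → ℝ), ContDiffOn ℝ (⊤ : ℕ∞) f S → ∀ l ∈ S, DifferentiableAt ℝ f l :=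
    fun f hf l hl => (hf.contDiffAt (hSopen.mem_nhds hl)).differentiableAt (by simp)
  -- the momenta agree with the explicit formulas on S
  have hPu' : ∀ l ∈ S, Pu l
      = PUe b (n l) (deriv u l) (deriv v l) (deriv x l) (deriv y l) := fun l hl => by
    rw [hPu]
    exact (hasD_u b m (n l) (deriv u l) (deriv v l) (deriv x l) (deriv y l)
      (ne_of_gt (hdu l hl)) (ne_of_gt (hpos l hl))).deriv
  have hPv' : ∀ l ∈ S, Pv l
      = PVe b (n l) (deriv u l) (deriv v l) (deriv x l) (deriv y l) := fun l hl => by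
    rw [hPv]
    exact (hasD_v b m (n l) (deriv u l) (deriv v l) (deriv x l) (deriv y l)
      (ne_of_gt (hpos l hl))).deriv
  have hPx' : ∀ l ∈ S, Px l
      = PXe b (n l) (deriv u l) (deriv v l) (deriv x l) (deriv y l) := fun l hl => by
    rw [hPx]
    exact (hasD_x b m (n l) (deriv u l) (deriv v l) (deriv x l) (deriv y l)
      (ne_of_gt (hpos l hl))).deriv
  have hPy' : ∀ l ∈ S, Py l
      = PYe b (n l) (deriv u l) (deriv v l) (deriv x l) (deriv y l) := fun l hl => by
    rw [hPy]
    exact (hasD_y b m (n l) (deriv u l) (deriv v l) (deriv x l) (deriv y l)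
      (ne_of_gt (hpos l hl))).deriv
  -- differentiability of the momenta on S
  have hmemS : ∀ l ∈ S, S ∈ nhds l := fun l hl => hSopen.mem_nhds hl
  have hPuDiff : ∀ l ∈ S, DifferentiableAt ℝ Pu l := fun l hl => by
    have hev : Pu =ᶠ[nhds l]
        fun l => PUe b (n l) (deriv u l) (deriv v l) (deriv x l) (deriv y l) :=
      Filter.eventuallyEq_of_mem (hmemS l hl) (fun z hz => hPu' z hz)
    exact (diffPUe (diffAt n hn l hl) (diffAt _ hud l hl) (diffAt _ hvd l hl)
      (diffAt _ hxd l hl) (diffAt _ hyd l hl) (ne_of_gt (hnpos l hl))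
      (ne_of_gt (hdu l hl)) (ne_of_gt (hpos l hl))).congr_of_eventuallyEq hev
  have hPvDiff : ∀ l ∈ S, DifferentiableAt ℝ Pv l := fun l hl => by
    have hev : Pv =ᶠ[nhds l]
        fun l => PVe b (n l) (deriv u l) (deriv v l) (deriv x l) (deriv y l) :=
      Filter.eventuallyEq_of_mem (hmemS l hl) (fun z hz => hPv' z hz)
    exact (diffPVe (diffAt n hn l hl) (diffAt _ hud l hl) (diffAt _ hvd l hl)
      (diffAt _ hxd l hl) (diffAt _ hyd l hl) (ne_of_gt (hnpos l hl))
      (ne_of_gt (hdu l hl)) (ne_of_gt (hpos l hl))).congr_of_eventuallyEq hev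
  have hPxDiff : ∀ l ∈ S, DifferentiableAt ℝ Px l := fun l hl => by
    have hev : Px =ᶠ[nhds l]
        fun l => PXe b (n l) (deriv u l) (deriv v l) (deriv x l) (deriv y l) :=
      Filter.eventuallyEq_of_mem (hmemS l hl) (fun z hz => hPx' z hz)
    exact (diffPXe (diffAt n hn l hl) (diffAt _ hud l hl) (diffAt _ hvd l hl)
      (diffAt _ hxd l hl) (diffAt _ hyd l hl) (ne_of_gt (hnpos l hl))
      (ne_of_gt (hdu l hl)) (ne_of_gt (hpos l hl))).congr_of_eventuallyEq hev
  have hPyDiff : ∀ l ∈ S, DifferentiableAt ℝ Py l := fun l hl => by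
    have hev : Py =ᶠ[nhds l]
        fun l => PYe b (n l) (deriv u l) (deriv v l) (deriv x l) (deriv y l) :=
      Filter.eventuallyEq_of_mem (hmemS l hl) (fun z hz => hPy' z hz)
    exact (diffPYe (diffAt n hn l hl) (diffAt _ hud l hl) (diffAt _ hvd l hl)
      (diffAt _ hxd l hl) (diffAt _ hyd l hl) (ne_of_gt (hnpos l hl))
      (ne_of_gt (hdu l hl)) (ne_of_gt (hpos l hl))).congr_of_eventuallyEq hev
  -- the charge
  set Q : ℝ → ℝ := fun l => (b - 1) * u l * Pu l + (1 + b) * v l * Pv l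
      + b * x l * Px l + b * y l * Py l with hQdef
  have hQderiv : ∀ l ∈ S, HasDerivAt Q 0 l := by
    intro l hl
    have hu1 : HasDerivAt u (deriv u l) l := (diffAt u hu l hl).hasDerivAt
    have hv1 : HasDerivAt v (deriv v l) l := (diffAt v hv l hl).hasDerivAt
    have hx1 : HasDerivAt x (deriv x l) l := (diffAt x hx l hl).hasDerivAt
    have hy1 : HasDerivAt y (deriv y l) l := (diffAt y hy l hl).hasDerivAt
    obtain ⟨e1, e2, e3, e4⟩ := hEL l hl
    have hPu1 : HasDerivAt Pu 0 l := e1 ▸ (hPuDiff l hl).hasDerivAt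
    have hPv1 : HasDerivAt Pv 0 l := e2 ▸ (hPvDiff l hl).hasDerivAt
    have hPx1 : HasDerivAt Px 0 l := e3 ▸ (hPxDiff l hl).hasDerivAt
    have hPy1 : HasDerivAt Py 0 l := e4 ▸ (hPyDiff l hl).hasDerivAt
    have t1 := (hu1.const_mul (b - 1)).mul hPu1
    have t2 := (hv1.const_mul (1 + b)).mul hPv1
    have t3 := (hx1.const_mul b).mul hPx1
    have t4 := (hy1.const_mul b).mul hPy1
    have hQ := ((t1.add t2).add t3).add t4
    have hD0 : (b - 1) * deriv u l * Pu l + (b - 1) * u l * 0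
        + ((1 + b) * deriv v l * Pv l + (1 + b) * v l * 0)
        + (b * deriv x l * Px l + b * x l * 0)
        + (b * deriv y l * Py l + b * y l * 0) = 0 := by
      rw [hPu' l hl, hPv' l hl, hPx' l hl, hPy' l hl]
      have hk := keyid b (n l) (deriv u l) (deriv v l) (deriv x l) (deriv y l)
        (ne_of_gt (hnpos l hl)) (hdu l hl) (hpos l hl)
      linear_combination hk
    rw [hQdef]
    exact hD0 ▸ hQ
  -- constancy on the convex set S
  have hdiffQ : DifferentiableOn ℝ Q S :=
    fun l hl => ((hQderiv l hl).differentiableAt).differentiableWithinAt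
  have hfd : ∀ l ∈ S, fderivWithin ℝ Q S l = 0 := by
    intro l hl
    rw [fderivWithin_of_isOpen hSopen hl]
    have : deriv Q l = 0 := (hQderiv l hl).deriv
    have h2 : HasDerivAt Q (deriv Q l) l := (hQderiv l hl).differentiableAt.hasDerivAt
    rw [this] at h2
    rw [h2.hasFDerivAt.fderiv]
    ext w
    simp
  exact (convex_Ioo a₁ a₂).is_const_of_fderivWithin_eq_zero hdiffQ hfd h₁ h₂
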